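/- Let ν ≥ 3 and define τ_ν(x) = x·Φ_ν(x) + √(ν/(ν−2))·φ_{ν−2}(x/√(ν/(ν−2))), where φ_ν is the standard Student-t density with ν degrees of freedom and Φ_ν its cumulative distribution function. Then for all real numbers u ≥ 0, s > 0, σ̃ > 0 and S ≥ 0: σ̃·s·τ_ν((u + S·s)/(σ̃·s)) ≤ u + (S + 2σ̃)·s. -/

import Mathlib

open MeasureTheory

/-- The standard Student-t density with `ν` degrees of freedom. -/
noncomputable def tpdf (ν x : ℝ) : ℝ :=
  Real.Gamma ((ν + 1) / 2) / (Real.sqrt (ν * Real.pi) * Real.Gamma (ν / 2)) *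
    (1 + x ^ 2 / ν) ^ (-((ν + 1) / 2))

/-- The cumulative distribution function of the standard Student-t distribution
with `ν` degrees of freedom. -/
noncomputable def tcdf (ν x : ℝ) : ℝ := ∫ t in Set.Iic x, tpdf ν t

/-- `τ_ν(x) = x·Φ_ν(x) + √(ν/(ν−2))·φ_{ν−2}(x/√(ν/(ν−2)))`. -/
noncomputable def tau (ν x : ℝ) : ℝ :=
  x * tcdf ν x +
    Real.sqrt (ν / (ν - 2)) * tpdf (ν - 2) (x / Real.sqrt (ν / (ν - 2)))

/-!
For `x ≥ 0`, `x Φ_ν(x) ≤ x`, and the density `φ_m` never exceeds its peak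
`Γ((m+1)/2) / (√(mπ) Γ(m/2)) ≤ 1/√(2π)` (log-convexity of `Γ` between `m/2` and `m/2 + 1`), so
`τ_ν(x) ≤ x + 2` once `√(ν/(ν-2)) ≤ 2`; multiplying by `σ̃ s` gives the bound.
That `Φ_ν ≤ 1` needs the normalisation of `φ_ν`, obtained by writing the kernel
`(1 + t²/ν)^(-p)` as a Gamma mixture of Gaussian kernels and applying Fubini.
-/

open Real Set

theorem Real.Gamma_add_half_le_mul_sqrt {m : ℝ} (hm : 0 < m) :
    Gamma (m + 1 / 2) ≤ Gamma m * √m := by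
  have hΓ := (Gamma_pos_of_pos hm).le
  calc Gamma (m + 1 / 2) = Gamma (1 / 2 * m + 1 / 2 * (m + 1)) := by ring_nf
    _ ≤ Gamma m ^ (1 / 2 : ℝ) * Gamma (m + 1) ^ (1 / 2 : ℝ) :=
        Gamma_mul_add_mul_le_rpow_Gamma_mul_rpow_Gamma hm (by linarith) (by norm_num)
          (by norm_num) (by norm_num)
    _ = √(Gamma m ^ 2 * m) := by
        rw [Gamma_add_one hm.ne', ← sqrt_eq_rpow, ← sqrt_eq_rpow, ← sqrt_mul hΓ]
        ring_nf
    _ = Gamma m * √m := by rw [sqrt_mul (sq_nonneg _), sqrt_sq hΓ]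

lemma tpdf_nonneg {ν : ℝ} (hν : 0 ≤ ν) (x : ℝ) : 0 ≤ tpdf ν x := by
  unfold tpdf
  have := Gamma_nonneg_of_nonneg (by linarith : (0 : ℝ) ≤ (ν + 1) / 2)
  have := Gamma_nonneg_of_nonneg (by linarith : (0 : ℝ) ≤ ν / 2)
  positivity

lemma tpdf_le_inv_sqrt_two_pi {ν : ℝ} (hν : 0 < ν) (x : ℝ) : tpdf ν x ≤ (√(2 * π))⁻¹ := by
  have hker : (1 + x ^ 2 / ν) ^ (-((ν + 1) / 2)) ≤ 1 :=
    rpow_le_one_of_one_le_of_nonpos (le_add_of_nonneg_right (by positivity)) (by linarith)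
  have hΓ := Gamma_pos_of_pos (half_pos hν)
  have hsqrt : √(ν / 2) * √(2 * π) = √(ν * π) := by
    rw [← sqrt_mul (by positivity)]
    congr 1
    field_simp
  have hconst : Gamma ((ν + 1) / 2) / (√(ν * π) * Gamma (ν / 2)) ≤ (√(2 * π))⁻¹ := by
    rw [div_le_iff₀ (by positivity), ← hsqrt]
    calc Gamma ((ν + 1) / 2) = Gamma (ν / 2 + 1 / 2) := by ring_nf
      _ ≤ Gamma (ν / 2) * √(ν / 2) := Gamma_add_half_le_mul_sqrt (half_pos hν)
      _ = (√(2 * π))⁻¹ * (√(ν / 2) * √(2 * π) * Gamma (ν / 2)) := by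
        field_simp
  calc tpdf ν x ≤ Gamma ((ν + 1) / 2) / (√(ν * π) * Gamma (ν / 2)) * 1 :=
        mul_le_mul_of_nonneg_left hker (by positivity)
    _ ≤ (√(2 * π))⁻¹ := by rwa [mul_one]

lemma exp_neg_one_add_sq_div_mul (ν s t : ℝ) :
    exp (-((1 + t ^ 2 / ν) * s)) = exp (-s) * exp (-(s / ν) * t ^ 2) := by
  rw [← exp_add]
  ring_nf

lemma integrable_exp_neg_one_add_sq_div_mul {ν s : ℝ} (hν : 0 < ν) (hs : 0 < s) :
    Integrable fun t : ℝ => exp (-((1 + t ^ 2 / ν) * s)) := by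
  simp only [exp_neg_one_add_sq_div_mul]
  exact (integrable_exp_neg_mul_sq (by positivity)).const_mul _

lemma integral_exp_neg_one_add_sq_div_mul {ν s : ℝ} (hν : 0 < ν) (hs : 0 < s) :
    ∫ t : ℝ, exp (-((1 + t ^ 2 / ν) * s)) = √(ν * π) * exp (-s) * s ^ (-(1 / 2 : ℝ)) := by
  simp only [exp_neg_one_add_sq_div_mul]
  rw [integral_const_mul, integral_gaussian, rpow_neg hs.le, ← sqrt_eq_rpow,
    show π / (s / ν) = ν * π / s by field_simp, sqrt_div' _ hs.le]
  ring

theorem integral_one_add_sq_div_rpow_neg {ν p : ℝ} (hν : 0 < ν) (hp : 1 / 2 < p) :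
    ∫ t : ℝ, (1 + t ^ 2 / ν) ^ (-p) = √(ν * π) * Gamma (p - 1 / 2) / Gamma p := by
  set F : ℝ → ℝ → ℝ := fun s t => s ^ (p - 1) * exp (-((1 + t ^ 2 / ν) * s))
  have hF_nonneg : ∀ s ∈ Ioi (0 : ℝ), ∀ t, 0 ≤ F s t := fun s hs t =>
    mul_nonneg (rpow_nonneg (le_of_lt hs) _) (exp_pos _).le
  have hF_t : ∀ s ∈ Ioi (0 : ℝ), ∫ t, F s t = √(ν * π) * (exp (-s) * s ^ (p - 1 / 2 - 1)) := by
    intro s hs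
    rw [integral_const_mul, integral_exp_neg_one_add_sq_div_mul hν hs,
      show p - 1 / 2 - 1 = (p - 1) + -(1 / 2) by ring, rpow_add hs]
    ring
  have hF_s : ∀ t, ∫ s in Ioi 0, F s t = Gamma p * (1 + t ^ 2 / ν) ^ (-p) := by
    intro t
    have hr : 0 < 1 + t ^ 2 / ν := by positivity
    rw [integral_rpow_mul_exp_neg_mul_Ioi (by linarith) hr, one_div, inv_rpow hr.le,
      ← rpow_neg hr.le, mul_comm]
  have hF : Integrable (Function.uncurry F) ((volume.restrict (Ioi 0)).prod volume) := by
    refine (integrable_prod_iff (Measurable.aestronglyMeasurable (by fun_prop))).2 ⟨?_, ?_⟩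
    · filter_upwards [ae_restrict_mem measurableSet_Ioi] with s hs
      exact (integrable_exp_neg_one_add_sq_div_mul hν hs).const_mul (s ^ (p - 1))
    · refine ((GammaIntegral_convergent (by linarith : 0 < p - 1 / 2)).const_mul
        (√(ν * π))).congr ?_
      filter_upwards [ae_restrict_mem measurableSet_Ioi] with s hs
      simp only [Function.uncurry_apply_pair, norm_of_nonneg (hF_nonneg s hs _), hF_t s hs]
  have hΓ := Gamma_pos_of_pos (by linarith : 0 < p)
  rw [eq_div_iff hΓ.ne', mul_comm, ← integral_const_mul]
  calc ∫ t, Gamma p * (1 + t ^ 2 / ν) ^ (-p) = ∫ t, ∫ s in Ioi 0, F s t := by simp only [hF_s]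
    _ = ∫ s in Ioi 0, ∫ t, F s t := (integral_integral_swap hF).symm
    _ = ∫ s in Ioi 0, √(ν * π) * (exp (-s) * s ^ (p - 1 / 2 - 1)) :=
        setIntegral_congr_fun measurableSet_Ioi hF_t
    _ = √(ν * π) * Gamma (p - 1 / 2) := by
        rw [integral_const_mul, Gamma_eq_integral (by linarith)]

lemma integral_tpdf {ν : ℝ} (hν : 0 < ν) : ∫ t, tpdf ν t = 1 := by
  have := Gamma_pos_of_pos (half_pos hν)
  have := Gamma_pos_of_pos (by linarith : 0 < (ν + 1) / 2)
  simp only [tpdf]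
  rw [integral_const_mul, integral_one_add_sq_div_rpow_neg hν (by linarith),
    show (ν + 1) / 2 - 1 / 2 = ν / 2 by ring]
  field_simp

lemma tcdf_le_one {ν : ℝ} (hν : 0 < ν) (x : ℝ) : tcdf ν x ≤ 1 := by
  -- `∫ tpdf ν = 1 ≠ 0` already forces integrability, `∫` being `0` otherwise
  have hint : Integrable (tpdf ν) := .of_integral_ne_zero (by simp [integral_tpdf hν])
  calc tcdf ν x ≤ ∫ t, tpdf ν t :=
        setIntegral_le_integral hint (.of_forall (tpdf_nonneg hν.le))
    _ = 1 := integral_tpdf hν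

lemma tau_le_add_two {ν x : ℝ} (hν : 3 ≤ ν) (hx : 0 ≤ x) : tau ν x ≤ x + 2 := by
  have hcdf : x * tcdf ν x ≤ x := mul_le_of_le_one_right hx (tcdf_le_one (by linarith) x)
  have hscale : √(ν / (ν - 2)) ≤ 2 := by
    rw [sqrt_le_iff, div_le_iff₀ (by linarith)]
    constructor <;> linarith
  have hpdf : tpdf (ν - 2) (x / √(ν / (ν - 2))) ≤ 1 :=
    (tpdf_le_inv_sqrt_two_pi (by linarith) _).trans
      (inv_le_one_of_one_le₀ (one_le_sqrt.2 (by nlinarith [pi_gt_three])))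
  have := mul_le_mul hscale hpdf (tpdf_nonneg (by linarith) _) zero_le_two
  unfold tau
  linarith

/-- HEI upper bound: for `ν ≥ 3` and all `u ≥ 0`, `s > 0`,
`σ̃ > 0`, `S ≥ 0`, `σ̃·s·τ_ν((u + S·s)/(σ̃·s)) ≤ u + (S + 2σ̃)·s`. -/
theorem hei_upper_bound (ν : ℝ) (hν : 3 ≤ ν)
    (u s σt S : ℝ) (hu : 0 ≤ u) (hs : 0 < s) (hσt : 0 < σt) (hS : 0 ≤ S) :
    σt * s * tau ν ((u + S * s) / (σt * s)) ≤ u + (S + 2 * σt) * s := by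
  have hσs : 0 < σt * s := by positivity
  calc σt * s * tau ν ((u + S * s) / (σt * s))
      ≤ σt * s * ((u + S * s) / (σt * s) + 2) :=
        mul_le_mul_of_nonneg_left (tau_le_add_two hν (by positivity)) hσs.le
    _ = u + (S + 2 * σt) * s := by
        field_simp
        ring
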